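/- arXiv:2402.18437 — 5 statements merged into one kernel-verified Lean document; each statement's English description precedes it below -/
import Mathlib

section
/- (Lemma 21.1) If q₁ and q₂ are real binary quadratic forms that are linearly independent over ℝ, then there exist an invertible 2×2 real matrix A and real numbers d₁, d₂ such that d₁·q₁(A·v) + d₂·q₂(A·v) = v₁·v₂ for all v = (v₁, v₂) ∈ ℝ². -/
/-! On forms `αx² + βxy + γy²` with `α + γ = 0` the discriminant `β² - 4αγ = β² + 4α²` is
positive definite, and the plane of such forms meets the pencil spanned by `q₁, q₂`
nontrivially. A form with positive discriminant is a product of two independent linear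
forms, and taking these as new coordinates turns it into `xy`. -/

lemma exists_not_and_eq_zero_mul_add_mul_eq_zero (s₁ s₂ : ℝ) :
    ∃ c d : ℝ, ¬(c = 0 ∧ d = 0) ∧ c * s₁ + d * s₂ = 0 := by
  by_cases hs₂ : s₂ = 0
  · exact ⟨0, 1, by simp, by simp [hs₂]⟩
  · exact ⟨s₂, -s₁, fun h => hs₂ h.1, by ring⟩

lemma discrim_pos_of_add_eq_zero {α β γ : ℝ} (hαγ : α + γ = 0) (h : α ≠ 0 ∨ β ≠ 0) :
    0 < discrim α β γ := by
  rw [discrim, show γ = -α by linarith]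
  rcases h with h | h
  · nlinarith [sq_pos_of_ne_zero h, sq_nonneg β]
  · nlinarith [sq_pos_of_ne_zero h, sq_nonneg α]

lemma exists_eq_mul_linear_of_discrim_pos {α β γ : ℝ} (h : 0 < discrim α β γ) :
    ∃ p r s t : ℝ, p * t - r * s ≠ 0 ∧
      ∀ x y : ℝ, α * x ^ 2 + β * x * y + γ * y ^ 2 = (p * x + r * y) * (s * x + t * y) := by
  by_cases hα : α = 0
  · have hβ : β ≠ 0 := by
      rintro rfl
      simp [discrim, hα] at h
    exact ⟨0, 1, β, γ, by simpa using hβ, fun x y => by rw [hα]; ring⟩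
  · set δ := √(discrim α β γ)
    have hδ : 0 < δ := Real.sqrt_pos.mpr h
    have hδ_sq : δ ^ 2 = β ^ 2 - 4 * α * γ := Real.sq_sqrt h.le
    -- the linear factors vanish at the two roots `(-β ± δ) / (2α)` of `α z² + β z + γ`
    refine ⟨α, (β + δ) / 2, 1, (β - δ) / (2 * α), ?_, fun x y => ?_⟩
    · field_simp
      linarith
    · field_simp
      linear_combination y ^ 2 * hδ_sq

lemma exists_det_ne_zero_linear_eq_coord (p r s t : ℝ) (h : p * t - r * s ≠ 0) :
    ∃ A : Matrix (Fin 2) (Fin 2) ℝ, A.det ≠ 0 ∧ ∀ x y : ℝ,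
      p * (A 0 0 * x + A 0 1 * y) + r * (A 1 0 * x + A 1 1 * y) = x ∧
        s * (A 0 0 * x + A 0 1 * y) + t * (A 1 0 * x + A 1 1 * y) = y := by
  set Δ := p * t - r * s
  refine ⟨!![t / Δ, -r / Δ; -s / Δ, p / Δ], ?_, fun x y => ⟨?_, ?_⟩⟩
  · rw [Matrix.det_fin_two_of, show t / Δ * (p / Δ) - -r / Δ * (-s / Δ) = Δ⁻¹ by
      field_simp; ring]
    exact inv_ne_zero h
  all_goals
    simp only [Matrix.of_apply, Matrix.cons_val_zero, Matrix.cons_val_one]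
    field_simp
    ring

lemma exists_det_ne_zero_eq_mul_of_discrim_pos {α β γ : ℝ} (h : 0 < discrim α β γ) :
    ∃ A : Matrix (Fin 2) (Fin 2) ℝ, A.det ≠ 0 ∧ ∀ x y : ℝ,
      α * (A 0 0 * x + A 0 1 * y) ^ 2 + β * (A 0 0 * x + A 0 1 * y) * (A 1 0 * x + A 1 1 * y)
        + γ * (A 1 0 * x + A 1 1 * y) ^ 2 = x * y := by
  obtain ⟨p, r, s, t, hdet, hfactor⟩ := exists_eq_mul_linear_of_discrim_pos h
  obtain ⟨A, hA, hcoord⟩ := exists_det_ne_zero_linear_eq_coord p r s t hdet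
  refine ⟨A, hA, fun x y => ?_⟩
  rw [hfactor, (hcoord x y).1, (hcoord x y).2]

/-- **Lemma 21.1.** A linearly independent pair of real binary quadratic forms can be
normalized, by an invertible linear change of variables and a linear combination,
so that the combination becomes the form `xy`. -/
theorem lemma_21_1
    (q₁ q₂ : ℝ → ℝ → ℝ)
    (hq₁ : ∃ α β γ : ℝ, ∀ x y : ℝ, q₁ x y = α * x ^ 2 + β * x * y + γ * y ^ 2)
    (hq₂ : ∃ α β γ : ℝ, ∀ x y : ℝ, q₂ x y = α * x ^ 2 + β * x * y + γ * y ^ 2)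
    (hind : ∀ c d : ℝ, (∀ x y : ℝ, c * q₁ x y + d * q₂ x y = 0) → c = 0 ∧ d = 0) :
    ∃ A : Matrix (Fin 2) (Fin 2) ℝ, A.det ≠ 0 ∧
      ∃ d₁ d₂ : ℝ, ∀ x y : ℝ,
        d₁ * q₁ (A 0 0 * x + A 0 1 * y) (A 1 0 * x + A 1 1 * y)
          + d₂ * q₂ (A 0 0 * x + A 0 1 * y) (A 1 0 * x + A 1 1 * y) = x * y := by
  obtain ⟨a₁, b₁, c₁, h₁⟩ := hq₁
  obtain ⟨a₂, b₂, c₂, h₂⟩ := hq₂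
  obtain ⟨c, d, hcd, htrace⟩ := exists_not_and_eq_zero_mul_add_mul_eq_zero (a₁ + c₁) (a₂ + c₂)
  have hne : c * a₁ + d * a₂ ≠ 0 ∨ c * b₁ + d * b₂ ≠ 0 := by
    by_contra! h₀
    refine hcd (hind c d fun x y => ?_)
    rw [h₁, h₂]
    linear_combination (x ^ 2 - y ^ 2) * h₀.1 + x * y * h₀.2 + y ^ 2 * htrace
  obtain ⟨A, hA, hxy⟩ := exists_det_ne_zero_eq_mul_of_discrim_pos
    (discrim_pos_of_add_eq_zero (γ := c * c₁ + d * c₂) (by linear_combination htrace) hne)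
  refine ⟨A, hA, c, d, fun x y => ?_⟩
  rw [h₁, h₂]
  linear_combination hxy x y
end

section
/- (Proposition 21.3, relative invariance of G₀₂) Let a₁₁, a₁₂, a₂₁, a₂₂, d₁₁, d₁₂, d₂₁, d₂₂, G₀₂, S₀₂ be real numbers with a₁₁a₂₂ − a₁₂a₂₁ ≠ 0 satisfying the six equations 0 = −d₁₂ + a₁₁a₂₁, 0 = −d₁₁ + a₁₁a₂₂ + a₂₁a₁₂, 0 = −d₁₂·G₀₂ + a₁₂a₂₂, 0 = −d₂₂ + a₂₁²·S₀₂ + a₁₁², 0 = −d₂₁ + 2a₂₁a₂₂·S₀₂ + 2a₁₁a₁₂, 0 = −d₂₂·G₀₂ + a₂₂²·S₀₂ + a₁₂². Then a₂₂²·S₀₂ = a₁₁²·G₀₂. -/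
/-- **Proposition 21.3.** Relative invariance of the coefficient `G₀₂`: under the order-2
fundamental equations of the stability group, `a₂₂² S₀₂ = a₁₁² G₀₂`. -/
theorem prop_21_3
    (a11 a12 a21 a22 d11 d12 d21 d22 G02 S02 : ℝ)
    (hdet : a11 * a22 - a12 * a21 ≠ 0)
    (e1 : 0 = -d12 + a11 * a21)
    (e2 : 0 = -d11 + a11 * a22 + a21 * a12)
    (e3 : 0 = -d12 * G02 + a12 * a22)
    (e4 : 0 = -d22 + a21 ^ 2 * S02 + a11 ^ 2)
    (e5 : 0 = -d21 + 2 * a21 * a22 * S02 + 2 * a11 * a12)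
    (e6 : 0 = -d22 * G02 + a22 ^ 2 * S02 + a12 ^ 2) :
    a22 ^ 2 * S02 = a11 ^ 2 * G02 := by
  have h1 : a11 * a21 * G02 = a12 * a22 := by linear_combination (-G02) * e1 + e3
  have h2 : a21 ^ 2 * S02 * G02 + a11 ^ 2 * G02 = a22 ^ 2 * S02 + a12 ^ 2 := by
    linear_combination (-G02) * e4 + e6
  rcases eq_or_ne a21 0 with h21 | h21
  · -- then a12 * a22 = 0, and a22 ≠ 0 (else det = 0), so a12 = 0
    have ha22 : a22 ≠ 0 := by
      intro h; apply hdet; rw [h21, h]; ring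
    subst h21
    have ha12 : a12 = 0 := by
      have h : a12 * a22 = 0 := by linear_combination -h1
      rcases mul_eq_zero.mp h with h | h
      · exact h
      · exact absurd h ha22
    linear_combination -h2 - a12 * ha12
  · have key : (a11 * a22 - a12 * a21) * a21 * (a22 ^ 2 * S02 - a11 ^ 2 * G02) = 0 := by
      linear_combination (a22 * (a21 ^ 2 * S02 + a11 ^ 2) - a11 * (a11 * a22 - a12 * a21)) * h1
        - a11 * a21 * a22 * h2
    have := mul_eq_zero.mp key
    rcases this with h | h
    · rcases mul_eq_zero.mp h with h | h
      · exact absurd h hdet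
      · exact absurd h h21
    · linarith [h]
end

section
/- (Proposition 21.4, order-2 normal forms in the non-parallel case, existence) If q₁ and q₂ are real binary quadratic forms that are linearly independent over ℝ, then there exist an invertible 2×2 real matrix A, an invertible 2×2 real matrix D = (dᵢⱼ), and ε ∈ {−1, 0, 1} such that for all v = (v₁, v₂) ∈ ℝ²: d₁₁·q₁(A·v) + d₁₂·q₂(A·v) = v₁·v₂ and d₂₁·q₁(A·v) + d₂₂·q₂(A·v) = v₁² + ε·v₂². -/
/-!
The discriminant `β² - 4αγ` is a quadratic form of signature `(2, 1)` on the space of binary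
quadratic forms, and it is positive definite on the plane `α + γ = 0` spanned by `xy` and
`x² - y²`. The pencil spanned by `q₁` and `q₂` meets that plane, so it contains a form `p` of
positive discriminant; `p` splits into two independent linear factors, hence becomes `xy` after
a change of variables. Complete `p` to a basis `p, r` of the pencil. In the new variables `r`
is `a x² + b xy + g y²`, where `(a, g) ≠ (0, 0)` by independence; subtracting `b xy`, swapping the
variables if `a = 0` and rescaling each variable turns it into `± (x² + ε y²)`.
-/

namespace BinaryQuadratic

def form (α β γ : ℝ) : ℝ → ℝ → ℝ := fun x y => α * x ^ 2 + β * x * y + γ * y ^ 2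

def subst (A : Matrix (Fin 2) (Fin 2) ℝ) (q : ℝ → ℝ → ℝ) : ℝ → ℝ → ℝ :=
  fun x y => q (A 0 0 * x + A 0 1 * y) (A 1 0 * x + A 1 1 * y)

theorem subst_of (a b c d : ℝ) (q : ℝ → ℝ → ℝ) :
    subst !![a, b; c, d] q = fun x y => q (a * x + b * y) (c * x + d * y) :=
  rfl

theorem subst_subst (A B : Matrix (Fin 2) (Fin 2) ℝ) (q : ℝ → ℝ → ℝ) :
    subst A (subst B q) = subst (B * A) q := by
  funext x y
  simp only [subst, Matrix.mul_apply, Fin.sum_univ_two]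
  ring_nf

theorem subst_one (q : ℝ → ℝ → ℝ) : subst 1 q = q := by
  funext x y
  simp [subst]

theorem subst_inv_subst {A : Matrix (Fin 2) (Fin 2) ℝ} (hA : A.det ≠ 0) (q : ℝ → ℝ → ℝ) :
    subst A⁻¹ (subst A q) = q := by
  rw [subst_subst, Matrix.mul_nonsing_inv _ hA.isUnit, subst_one]

theorem exists_subst_form_eq_form (A : Matrix (Fin 2) (Fin 2) ℝ) (α β γ : ℝ) :
    ∃ α' β' γ', subst A (form α β γ) = form α' β' γ' :=
  ⟨α * A 0 0 ^ 2 + β * A 0 0 * A 1 0 + γ * A 1 0 ^ 2,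
    2 * α * A 0 0 * A 0 1 + β * (A 0 0 * A 1 1 + A 0 1 * A 1 0) + 2 * γ * A 1 0 * A 1 1,
    α * A 0 1 ^ 2 + β * A 0 1 * A 1 1 + γ * A 1 1 ^ 2, by funext x y; simp only [subst, form]; ring⟩

theorem smul_form (c α β γ : ℝ) : c • form α β γ = form (c * α) (c * β) (c * γ) := by
  funext x y
  simp only [Pi.smul_apply, smul_eq_mul, form]
  ring

theorem form_add_form (α β γ α' β' γ' : ℝ) :
    form α β γ + form α' β' γ' = form (α + α') (β + β') (γ + γ') := by
  funext x y
  simp only [Pi.add_apply, form]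
  ring

theorem linearIndependent_subst {q₁ q₂ : ℝ → ℝ → ℝ} (h : LinearIndependent ℝ ![q₁, q₂])
    {A : Matrix (Fin 2) (Fin 2) ℝ} (hA : A.det ≠ 0) :
    LinearIndependent ℝ ![subst A q₁, subst A q₂] := by
  refine LinearIndependent.pair_iff.mpr fun s t hst => LinearIndependent.pair_iff.mp h s t ?_
  rw [← subst_inv_subst hA (s • q₁ + t • q₂)]
  exact congrArg (subst A⁻¹) hst

theorem exists_discrim_pos_of_linearIndependent {α₁ β₁ γ₁ α₂ β₂ γ₂ : ℝ}
    (h : LinearIndependent ℝ ![form α₁ β₁ γ₁, form α₂ β₂ γ₂]) :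
    ∃ c d : ℝ, 0 < discrim (c * α₁ + d * α₂) (c * β₁ + d * β₂) (c * γ₁ + d * γ₂) := by
  obtain ⟨c, d, hcd, htrace⟩ :
      ∃ c d : ℝ, ¬(c = 0 ∧ d = 0) ∧ c * (α₁ + γ₁) + d * (α₂ + γ₂) = 0 := by
    by_cases h₂ : α₂ + γ₂ = 0
    · exact ⟨0, 1, by simp, by simp [h₂]⟩
    · exact ⟨α₂ + γ₂, -(α₁ + γ₁), fun h => h₂ h.1, by ring⟩
  refine ⟨c, d, ?_⟩
  have hγ : c * γ₁ + d * γ₂ = -(c * α₁ + d * α₂) := by linear_combination htrace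
  have hαβ : c * α₁ + d * α₂ ≠ 0 ∨ c * β₁ + d * β₂ ≠ 0 := by
    by_contra! hαβ
    refine hcd (LinearIndependent.pair_iff.mp h c d ?_)
    rw [smul_form, smul_form, form_add_form, hγ, hαβ.1, hαβ.2]
    funext x y
    simp [form]
  have hpos : 0 < (c * β₁ + d * β₂) ^ 2 + 4 * (c * α₁ + d * α₂) ^ 2 := by
    rcases hαβ with h | h <;> positivity
  rw [hγ, discrim]
  linarith

theorem exists_form_eq_subst_mul {α β γ : ℝ} (h : 0 < discrim α β γ) :
    ∃ M : Matrix (Fin 2) (Fin 2) ℝ, M.det ≠ 0 ∧ form α β γ = subst M fun x y => x * y := by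
  by_cases hα : α = 0
  · have hβ : β ≠ 0 := by
      rintro rfl
      simp [discrim, hα] at h
    refine ⟨!![0, 1; β, γ], by simpa [Matrix.det_fin_two_of] using hβ, ?_⟩
    funext x y
    simp only [form, subst_of, hα]
    ring
  · set s := √(discrim α β γ)
    have hs : s ^ 2 = β ^ 2 - 4 * α * γ := Real.sq_sqrt h.le
    refine ⟨!![α, (β - s) / 2; 1, (β + s) / (2 * α)], ?_, ?_⟩
    · rw [Matrix.det_fin_two_of, show α * ((β + s) / (2 * α)) - (β - s) / 2 * 1 = s by
        field_simp; ring]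
      exact (Real.sqrt_pos.mpr h).ne'
    · funext x y
      simp only [form, subst_of]
      field_simp
      linear_combination y ^ 2 * hs

theorem exists_subst_form_eq_mul {α β γ : ℝ} (h : 0 < discrim α β γ) :
    ∃ A : Matrix (Fin 2) (Fin 2) ℝ, A.det ≠ 0 ∧ subst A (form α β γ) = fun x y => x * y := by
  obtain ⟨M, hM, hform⟩ := exists_form_eq_subst_mul h
  exact ⟨M⁻¹, by simpa [Matrix.det_nonsing_inv] using hM, by rw [hform, subst_inv_subst hM]⟩

def HasNormalForm (q₁ q₂ : ℝ → ℝ → ℝ) : Prop :=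
  ∃ (A D : Matrix (Fin 2) (Fin 2) ℝ) (ε : ℝ),
    A.det ≠ 0 ∧ D.det ≠ 0 ∧ (ε = -1 ∨ ε = 0 ∨ ε = 1) ∧
    ∀ x y : ℝ,
      D 0 0 * subst A q₁ x y + D 0 1 * subst A q₂ x y = x * y ∧
      D 1 0 * subst A q₁ x y + D 1 1 * subst A q₂ x y = x ^ 2 + ε * y ^ 2

theorem HasNormalForm.of_subst {q₁ q₂ : ℝ → ℝ → ℝ} {B : Matrix (Fin 2) (Fin 2) ℝ}
    (hB : B.det ≠ 0) (h : HasNormalForm (subst B q₁) (subst B q₂)) : HasNormalForm q₁ q₂ := by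
  obtain ⟨A, D, ε, hA, hD, hε, hAD⟩ := h
  refine ⟨B * A, D, ε, by simp [Matrix.det_mul, hA, hB], hD, hε, ?_⟩
  simpa only [← subst_subst] using hAD

theorem HasNormalForm.of_smul_add_smul {q₁ q₂ : ℝ → ℝ → ℝ} {a b c d : ℝ} (hdet : a * d ≠ b * c)
    (h : HasNormalForm (a • q₁ + b • q₂) (c • q₁ + d • q₂)) : HasNormalForm q₁ q₂ := by
  obtain ⟨A, D, ε, hA, hD, hε, hAD⟩ := h
  refine ⟨A, D * !![a, b; c, d], ε, hA, ?_, hε, fun x y => ?_⟩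
  · simp [Matrix.det_mul, Matrix.det_fin_two_of, hD, sub_ne_zero.mpr hdet]
  · have hDM (i : Fin 2) : (D * !![a, b; c, d]) i 0 = D i 0 * a + D i 1 * c ∧
        (D * !![a, b; c, d]) i 1 = D i 0 * b + D i 1 * d := by
      simp [Matrix.mul_apply]
    obtain ⟨h₁, h₂⟩ := hAD x y
    simp only [subst, Pi.add_apply, Pi.smul_apply, smul_eq_mul] at h₁ h₂
    rw [(hDM 0).1, (hDM 0).2, (hDM 1).1, (hDM 1).2]
    simp only [subst]
    exact ⟨by linear_combination h₁, by linear_combination h₂⟩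

theorem exists_mul_sq_eq_sign (a : ℝ) : ∃ t ≠ 0, a * t ^ 2 = Real.sign a := by
  rcases eq_or_ne a 0 with rfl | ha
  · exact ⟨1, one_ne_zero, by simp [Real.sign_zero]⟩
  · refine ⟨(√|a|)⁻¹, by positivity, ?_⟩
    rw [inv_pow, Real.sq_sqrt (abs_nonneg a)]
    rcases ha.lt_or_gt with ha | ha
    · rw [Real.sign_of_neg ha, abs_of_neg ha]
      field_simp
    · rw [Real.sign_of_pos ha, abs_of_pos ha]
      field_simp

theorem hasNormalForm_mul_sq_add_sq {a : ℝ} (ha : a ≠ 0) (g : ℝ) :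
    HasNormalForm (fun x y => x * y) (fun x y => a * x ^ 2 + g * y ^ 2) := by
  obtain ⟨s, hs, has⟩ := exists_mul_sq_eq_sign a
  obtain ⟨t, ht, hgt⟩ := exists_mul_sq_eq_sign g
  have hσ : Real.sign a * Real.sign a = 1 := by
    rcases Real.sign_apply_eq_of_ne_zero a ha with h | h <;> rw [h] <;> norm_num
  refine ⟨!![s, 0; 0, t], !![(s * t)⁻¹, 0; 0, Real.sign a], Real.sign a * Real.sign g,
    ?_, ?_, ?_, fun x y => ⟨?_, ?_⟩⟩
  · simp [Matrix.det_fin_two_of, hs, ht]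
  · have : Real.sign a ≠ 0 := by rwa [Ne, Real.sign_eq_zero_iff]
    simp [Matrix.det_fin_two_of, hs, ht, this]
  · rcases Real.sign_apply_eq a with h | h | h <;> rcases Real.sign_apply_eq g with h' | h' | h' <;>
      simp [h, h']
  · simp only [subst_of, Matrix.of_apply, Matrix.cons_val_zero, Matrix.cons_val_one]
    field_simp
    ring
  · simp only [subst_of, Matrix.of_apply, Matrix.cons_val_zero, Matrix.cons_val_one]
    linear_combination Real.sign a * x ^ 2 * has + Real.sign a * y ^ 2 * hgt + x ^ 2 * hσ

theorem hasNormalForm_mul_form {a b g : ℝ}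
    (h : LinearIndependent ℝ ![fun x y => x * y, form a b g]) :
    HasNormalForm (fun x y => x * y) (form a b g) := by
  have hag : a ≠ 0 ∨ g ≠ 0 := by
    by_contra! hag
    refine one_ne_zero (LinearIndependent.pair_iff.mp h (-b) 1 ?_).2
    funext x y
    simp only [Pi.add_apply, Pi.smul_apply, smul_eq_mul, form, hag.1, hag.2, Pi.zero_apply]
    ring
  have hdiag : (-b) • (fun x y : ℝ => x * y) + (1 : ℝ) • form a b g =
      fun x y => a * x ^ 2 + g * y ^ 2 := by
    funext x y
    simp only [Pi.add_apply, Pi.smul_apply, smul_eq_mul, form]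
    ring
  refine HasNormalForm.of_smul_add_smul (a := 1) (b := 0) (c := -b) (d := 1) (by norm_num) ?_
  rw [one_smul, zero_smul, add_zero, hdiag]
  rcases hag with ha | hg
  · exact hasNormalForm_mul_sq_add_sq ha g
  · refine HasNormalForm.of_subst (B := !![0, 1; 1, 0]) (by simp [Matrix.det_fin_two_of]) ?_
    convert hasNormalForm_mul_sq_add_sq hg a using 1 <;> funext x y <;> simp only [subst_of] <;>
      ring

end BinaryQuadratic

/-- **Proposition 21.4** (existence part). A linearly independent pair of real binary
quadratic forms can be normalized, by an invertible linear change of variables and an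
invertible linear recombination, to one of `(xy, x²)`, `(xy, x² + y²)`, `(xy, x² − y²)`. -/
theorem prop_21_4
    (q₁ q₂ : ℝ → ℝ → ℝ)
    (hq₁ : ∃ α β γ : ℝ, ∀ x y : ℝ, q₁ x y = α * x ^ 2 + β * x * y + γ * y ^ 2)
    (hq₂ : ∃ α β γ : ℝ, ∀ x y : ℝ, q₂ x y = α * x ^ 2 + β * x * y + γ * y ^ 2)
    (hind : ∀ c d : ℝ, (∀ x y : ℝ, c * q₁ x y + d * q₂ x y = 0) → c = 0 ∧ d = 0) :
    ∃ (A D : Matrix (Fin 2) (Fin 2) ℝ) (ε : ℝ),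
      A.det ≠ 0 ∧ D.det ≠ 0 ∧ (ε = -1 ∨ ε = 0 ∨ ε = 1) ∧
      ∀ x y : ℝ,
        D 0 0 * q₁ (A 0 0 * x + A 0 1 * y) (A 1 0 * x + A 1 1 * y)
            + D 0 1 * q₂ (A 0 0 * x + A 0 1 * y) (A 1 0 * x + A 1 1 * y) = x * y ∧
        D 1 0 * q₁ (A 0 0 * x + A 0 1 * y) (A 1 0 * x + A 1 1 * y)
            + D 1 1 * q₂ (A 0 0 * x + A 0 1 * y) (A 1 0 * x + A 1 1 * y)
          = x ^ 2 + ε * y ^ 2 := by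
  show BinaryQuadratic.HasNormalForm q₁ q₂
  have hlin : LinearIndependent ℝ ![q₁, q₂] := LinearIndependent.pair_iff.mpr fun c d h =>
    hind c d fun x y => by simpa using congrFun₂ h x y
  obtain ⟨α₁, β₁, γ₁, h₁⟩ := hq₁
  obtain ⟨α₂, β₂, γ₂, h₂⟩ := hq₂
  obtain rfl : q₁ = BinaryQuadratic.form α₁ β₁ γ₁ := funext₂ h₁
  obtain rfl : q₂ = BinaryQuadratic.form α₂ β₂ γ₂ := funext₂ h₂
  obtain ⟨c, d, hdisc⟩ := BinaryQuadratic.exists_discrim_pos_of_linearIndependent hlin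
  have hcd : c * c ≠ d * -d := by
    rintro hcd
    obtain ⟨rfl, rfl⟩ : c = 0 ∧ d = 0 := by constructor <;> nlinarith [sq_nonneg c, sq_nonneg d]
    simp [discrim] at hdisc
  obtain ⟨A, hA, hp⟩ := BinaryQuadratic.exists_subst_form_eq_mul hdisc
  obtain ⟨a, b, g, hr⟩ := BinaryQuadratic.exists_subst_form_eq_form A
    (-d * α₁ + c * α₂) (-d * β₁ + c * β₂) (-d * γ₁ + c * γ₂)
  have hpr := BinaryQuadratic.linearIndependent_subst
    ((LinearIndependent.pair_add_smul_add_smul_iff c d (-d) c).mpr ⟨hlin, hcd⟩) hA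
  simp only [BinaryQuadratic.smul_form, BinaryQuadratic.form_add_form, hp, hr] at hpr
  refine BinaryQuadratic.HasNormalForm.of_smul_add_smul hcd (.of_subst hA ?_)
  simp only [BinaryQuadratic.smul_form, BinaryQuadratic.form_add_form, hp, hr]
  exact BinaryQuadratic.hasNormalForm_mul_form hpr
end

section
/- (Proposition 24.1, rigidity in Branch 2a) Let F, G : ℝ² → ℝ be real-analytic on an open neighborhood U of the origin with F(0,0) = G(0,0) = 0 and with all first-order and second-order partial derivatives of F and of G vanishing at (0,0). Suppose there exist two affine vector fields L and L' on ℝ⁴, each tangent to the graph S = {(x, y, F(x,y), G(x,y)) : (x,y) ∈ U}, such that the two vectors of ℝ² formed by the first two components of L(0,0,0,0) and of L'(0,0,0,0) are linearly independent. Then F and G vanish identically on some neighborhood of (0,0); i.e., the only affinely homogeneous surface germ in Branch 2a is the affine plane {u = 0, v = 0}. -/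
/-- An affine vector field on `ℝ⁴`: a map `p ↦ M·p + c`. -/
def IsAffineVF (L : (Fin 4 → ℝ) → Fin 4 → ℝ) : Prop :=
  ∃ (M : Matrix (Fin 4) (Fin 4) ℝ) (c : Fin 4 → ℝ), ∀ p, L p = M.mulVec p + c

/-- Tangency of a vector field `X` on `ℝ⁴ ∋ (x,y,u,v)` to the graph
`{(x, y, F(x,y), G(x,y)) : (x,y) ∈ U}`. -/
def TangentToGraphOn (F G : ℝ × ℝ → ℝ) (U : Set (ℝ × ℝ))
    (X : (Fin 4 → ℝ) → Fin 4 → ℝ) : Prop :=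
  ∀ p ∈ U,
    X ![p.1, p.2, F p, G p] 2
        = fderiv ℝ F p (1, 0) * X ![p.1, p.2, F p, G p] 0
          + fderiv ℝ F p (0, 1) * X ![p.1, p.2, F p, G p] 1 ∧
    X ![p.1, p.2, F p, G p] 3
        = fderiv ℝ G p (1, 0) * X ![p.1, p.2, F p, G p] 0
          + fderiv ℝ G p (0, 1) * X ![p.1, p.2, F p, G p] 1

open Filter Asymptotics Nat in
lemma abs_pow_isBigO_aux241 {j n : ℕ} (h : j ≤ n) :
    (fun t : ℝ => |t| ^ n) =O[nhds 0] fun t => |t| ^ j := by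
  rw [isBigO_iff]
  refine ⟨1, ?_⟩
  have h1 : ∀ᶠ t : ℝ in nhds 0, |t| ≤ 1 := by
    have : Tendsto (fun t : ℝ => |t|) (nhds 0) (nhds 0) := by
      simpa using continuous_abs.tendsto (0:ℝ)
    filter_upwards [this (Iic_mem_nhds (by norm_num : (0:ℝ) < 1))] with t ht using ht
  filter_upwards [h1] with t ht
  simp only [norm_pow, Real.norm_eq_abs, abs_abs, one_mul]
  exact pow_le_pow_of_le_one (abs_nonneg t) ht h

open Filter Asymptotics Nat in
lemma apply_isBigO_aux241 {D : ℝ → (ℝ × ℝ →L[ℝ] ℝ)} {g : ℝ → ℝ} (h : D =O[nhds 0] g)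
    (w : ℝ × ℝ) : (fun t => D t w) =O[nhds 0] g := by
  calc (fun t => D t w) =O[nhds 0] D := by
        rw [isBigO_iff]
        exact ⟨‖w‖, Filter.Eventually.of_forall fun t => by
          simpa [mul_comm] using (D t).le_opNorm w⟩
    _ =O[nhds 0] g := h

open Filter Asymptotics Nat in
lemma taylorA_aux241 {E : Type*} [NormedAddCommGroup E] [NormedSpace ℝ E] [CompleteSpace E]
    {f : ℝ × ℝ → E} (hf : AnalyticAt ℝ f 0) (m : ℕ)
    (hvan : ∀ j < m, ∀ w : ℝ × ℝ, iteratedFDeriv ℝ j f 0 (fun _ => w) = 0) (v : ℝ × ℝ) :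
    (fun t : ℝ => f (t • v) - t ^ m • ((m ! : ℝ)⁻¹ • iteratedFDeriv ℝ m f 0 fun _ => v))
      =O[nhds 0] fun t => |t| ^ (m + 1) := by
  obtain ⟨p, r, hp⟩ := hf
  have hfac : ∀ n : ℕ, ∀ w : ℝ × ℝ,
      ((n ! : ℝ)) • p n (fun _ => w) = iteratedFDeriv ℝ n f 0 (fun _ => w) := by
    intro n w
    rw [← hp.factorial_smul w n]
    exact (Nat.cast_smul_eq_nsmul ℝ _ _)
  have hdiag : ∀ j < m, ∀ w : ℝ × ℝ, p j (fun _ => w) = 0 := by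
    intro j hj w
    have h1 := hfac j w
    rw [hvan j hj w] at h1
    have : (j ! : ℝ) ≠ 0 := Nat.cast_ne_zero.2 (Nat.factorial_ne_zero j)
    simpa [this] using (smul_eq_zero.1 h1)
  have hmco : (m ! : ℝ)⁻¹ • iteratedFDeriv ℝ m f 0 (fun _ => v) = p m (fun _ => v) := by
    rw [← hfac m v, smul_smul, inv_mul_cancel₀ (Nat.cast_ne_zero.2 (Nat.factorial_ne_zero m)),
      one_smul]
  have hps : ∀ t : ℝ, p.partialSum (m + 1) (t • v) = t ^ m • p m (fun _ => v) := by
    intro t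
    rw [FormalMultilinearSeries.partialSum]
    rw [Finset.sum_eq_single m]
    · have := (p m).map_smul_univ (fun _ : Fin m => t) (fun _ : Fin m => v)
      simpa [Finset.prod_const] using this
    · intro j hjr hjne
      have hj : j < m := by
        rcases Nat.lt_succ_iff_lt_or_eq.1 (Finset.mem_range.1 hjr) with h | h
        · exact h
        · exact absurd h hjne
      exact hdiag j hj (t • v)
    · intro hm; exact absurd (Finset.self_mem_range_succ m) hm
  have htend : Tendsto (fun t : ℝ => t • v) (nhds 0) (nhds 0) := by
    have hc : Continuous fun t : ℝ => t • v := continuous_id.smul continuous_const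
    simpa using hc.tendsto (0 : ℝ)
  have hO := (hp.hasFPowerSeriesAt.isBigO_sub_partialSum_pow (m + 1)).comp_tendsto htend
  have h2 : (fun t : ℝ => ‖t • v‖ ^ (m + 1)) =O[nhds 0] fun t => |t| ^ (m + 1) := by
    rw [isBigO_iff]
    refine ⟨‖v‖ ^ (m + 1), Filter.Eventually.of_forall fun t => ?_⟩
    rw [Real.norm_eq_abs, Real.norm_eq_abs, abs_of_nonneg (by positivity),
      abs_of_nonneg (by positivity), norm_smul, Real.norm_eq_abs, mul_pow]
    exact le_of_eq (by ring)
  refine IsBigO.trans ?_ h2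
  have : (fun t : ℝ => f (t • v) - t ^ m • ((m ! : ℝ)⁻¹ • iteratedFDeriv ℝ m f 0 fun _ => v))
      = fun t : ℝ => f ((0 : ℝ × ℝ) + t • v) - p.partialSum (m + 1) (t • v) := by
    funext t
    rw [zero_add, hps t, hmco]
  rw [this]
  exact hO

open Filter Asymptotics Nat in
lemma taylorA'_aux241 {E : Type*} [NormedAddCommGroup E] [NormedSpace ℝ E] [CompleteSpace E]
    {f : ℝ × ℝ → E} (hf : AnalyticAt ℝ f 0) (m : ℕ)
    (hvan : ∀ j < m, ∀ w : ℝ × ℝ, iteratedFDeriv ℝ j f 0 (fun _ => w) = 0) (v : ℝ × ℝ) :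
    (fun t : ℝ => f (t • v)) =O[nhds 0] fun t => |t| ^ m := by
  have h1 := taylorA_aux241 hf m hvan v
  have h2 : (fun t : ℝ => t ^ m • ((m ! : ℝ)⁻¹ • iteratedFDeriv ℝ m f 0 fun _ => v))
      =O[nhds 0] fun t => |t| ^ m := by
    rw [isBigO_iff]
    refine ⟨‖(m ! : ℝ)⁻¹ • iteratedFDeriv ℝ m f 0 fun _ => v‖,
      Filter.Eventually.of_forall fun t => ?_⟩
    rw [norm_smul]
    simp [abs_pow, abs_of_nonneg (pow_nonneg (abs_nonneg t) m), mul_comm]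
  have := (h1.trans (abs_pow_isBigO_aux241 (Nat.le_succ m))).add h2
  simpa using this

open Filter Asymptotics Nat in
lemma cancel_abs_aux241 {t : ℝ} (ht : t ≠ 0) {x C : ℝ} {k : ℕ}
    (h : |t| ^ k * x ≤ |t| ^ k * C) : x ≤ C :=
  le_of_mul_le_mul_left h (pow_pos (abs_pos.2 ht) k)

open Filter Asymptotics Nat in
lemma polyCoeff_aux241 {a b A : ℝ} {k : ℕ}
    (h : (fun t : ℝ => a + t * b + t ^ (k + 2) * A) =O[nhds 0] fun t => |t| ^ (k + 3)) :
    a = 0 ∧ b = 0 ∧ A = 0 := by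
  obtain ⟨C, hC⟩ := isBigO_iff.1 h
  have htend0 : Tendsto (fun t : ℝ => |t| ^ (k + 3)) (nhds 0) (nhds 0) := by
    have : Continuous fun t : ℝ => |t| ^ (k + 3) := (continuous_abs.pow _)
    simpa using this.tendsto (0 : ℝ)
  have h1 : Tendsto (fun t : ℝ => a + t * b + t ^ (k + 2) * A) (nhds 0) (nhds 0) :=
    h.trans_tendsto htend0
  have h2 : Tendsto (fun t : ℝ => a + t * b + t ^ (k + 2) * A) (nhds 0) (nhds a) := by
    have hc : Continuous fun t : ℝ => a + t * b + t ^ (k + 2) * A := by continuity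
    simpa using hc.tendsto (0 : ℝ)
  have ha : a = 0 := tendsto_nhds_unique h2 h1
  subst ha
  have hCb : ∀ᶠ t : ℝ in nhdsWithin 0 {(0:ℝ)}ᶜ, |b + t ^ (k + 1) * A| ≤ C * |t| ^ (k + 2) := by
    filter_upwards [eventually_nhdsWithin_of_eventually_nhds hC, self_mem_nhdsWithin]
      with t ht htne
    have hts : (0:ℝ) + t * b + t ^ (k + 2) * A = t * (b + t ^ (k + 1) * A) := by ring
    rw [hts] at ht
    simp only [Real.norm_eq_abs, abs_mul, abs_pow, abs_abs] at ht
    have h3 : |t| ^ 1 * |b + t ^ (k + 1) * A| ≤ |t| ^ 1 * (C * |t| ^ (k + 2)) := by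
      calc |t| ^ 1 * |b + t ^ (k + 1) * A| = |t| * |b + t ^ (k + 1) * A| := by ring
        _ ≤ C * |t| ^ (k + 3) := ht
        _ = |t| ^ 1 * (C * |t| ^ (k + 2)) := by ring
    exact cancel_abs_aux241 htne h3
  have hb : b = 0 := by
    have hbig : (fun t : ℝ => b + t ^ (k + 1) * A) =O[nhdsWithin 0 {(0:ℝ)}ᶜ]
        fun t => |t| ^ (k + 2) := by
      rw [isBigO_iff]
      exact ⟨C, by filter_upwards [hCb] with t ht; simpa [abs_of_nonneg, abs_pow] using ht⟩
    have h1' : Tendsto (fun t : ℝ => b + t ^ (k + 1) * A) (nhdsWithin 0 {(0:ℝ)}ᶜ) (nhds 0) :=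
      hbig.trans_tendsto (((continuous_abs.pow (k+2)).tendsto' 0 0 (by simp)).mono_left
        nhdsWithin_le_nhds)
    have h2' : Tendsto (fun t : ℝ => b + t ^ (k + 1) * A) (nhdsWithin 0 {(0:ℝ)}ᶜ) (nhds b) := by
      have hc : Continuous fun t : ℝ => b + t ^ (k + 1) * A := by continuity
      have := hc.tendsto (0 : ℝ)
      simp only [zero_pow (Nat.succ_ne_zero k), mul_zero, zero_mul, add_zero] at this
      simpa using this.mono_left nhdsWithin_le_nhds
    exact tendsto_nhds_unique h2' h1'
  subst hb
  refine ⟨rfl, rfl, ?_⟩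
  have hCA : ∀ᶠ t : ℝ in nhdsWithin 0 {(0:ℝ)}ᶜ, |A| ≤ C * |t| := by
    filter_upwards [eventually_nhdsWithin_of_eventually_nhds hC, self_mem_nhdsWithin]
      with t ht htne
    have hts : (0:ℝ) + t * 0 + t ^ (k + 2) * A = t ^ (k + 2) * A := by ring
    rw [hts] at ht
    simp only [Real.norm_eq_abs, abs_mul, abs_pow, abs_abs] at ht
    have h3 : |t| ^ (k + 2) * |A| ≤ |t| ^ (k + 2) * (C * |t|) := by
      calc |t| ^ (k + 2) * |A| ≤ C * |t| ^ (k + 3) := ht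
        _ = |t| ^ (k + 2) * (C * |t|) := by ring
    exact cancel_abs_aux241 htne h3
  have h1' : Tendsto (fun _ : ℝ => |A|) (nhdsWithin 0 {(0:ℝ)}ᶜ) (nhds 0) := by
    have hbig : (fun _ : ℝ => |A|) =O[nhdsWithin 0 {(0:ℝ)}ᶜ] fun t => |t| := by
      rw [isBigO_iff]
      exact ⟨C, by filter_upwards [hCA] with t ht; simpa using ht⟩
    have habs : Tendsto (fun t : ℝ => |t|) (nhdsWithin 0 {(0:ℝ)}ᶜ) (nhds 0) := by
      have : Tendsto (fun t : ℝ => |t|) (nhds 0) (nhds 0) := by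
        simpa using continuous_abs.tendsto (0:ℝ)
      exact this.mono_left nhdsWithin_le_nhds
    exact hbig.trans_tendsto habs
  have h2' : Tendsto (fun _ : ℝ => |A|) (nhdsWithin 0 {(0:ℝ)}ᶜ) (nhds |A|) :=
    tendsto_const_nhds
  exact abs_eq_zero.1 (tendsto_nhds_unique h2' h1')

open Filter Asymptotics Nat in
lemma core_aux241 (k : ℕ) (B1 B2 q0 q1 q2 b0 b1 b2 m02 m03 m12 m13 m22 m23 : ℝ)
    (eF eG e1 e2 : ℝ → ℝ)
    (hFo : eF =O[nhds 0] fun t : ℝ => |t| ^ (k + 3))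
    (hGo : eG =O[nhds 0] fun t : ℝ => |t| ^ (k + 3))
    (h1o : e1 =O[nhds 0] fun t : ℝ => |t| ^ (k + 3))
    (h2o : e2 =O[nhds 0] fun t : ℝ => |t| ^ (k + 3))
    (heq : ∀ᶠ t : ℝ in nhds 0,
      q2 + t * b2 + m22 * eF t + m23 * eG t
        = (e1 t + t ^ (k + 2) * B1) * (q0 + t * b0 + m02 * eF t + m03 * eG t)
          + (e2 t + t ^ (k + 2) * B2) * (q1 + t * b1 + m12 * eF t + m13 * eG t)) :
    q0 * B1 + q1 * B2 = 0 := by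
  have habs1 : (fun t : ℝ => |t| ^ 1) =O[nhds 0] fun _ : ℝ => (1:ℝ) :=
    (abs_pow_isBigO_aux241 (Nat.zero_le 1)).congr_right (fun t => pow_zero _)
  have hmulc : ∀ (C : ℝ) (f : ℝ → ℝ) (g : ℝ → ℝ), f =O[nhds 0] g →
      (fun t => C * f t) =O[nhds 0] g := fun C f g h => h.const_mul_left C
  have hsub : ∀ (b m2 m3 : ℝ), (fun t : ℝ => t * b + m2 * eF t + m3 * eG t)
      =O[nhds 0] fun t => |t| ^ 1 := by
    intro b m2 m3
    have h1 : (fun t : ℝ => t * b) =O[nhds 0] fun t => |t| ^ 1 := by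
      rw [isBigO_iff]
      exact ⟨|b|, Filter.Eventually.of_forall fun t => by simp [abs_mul, mul_comm]⟩
    have h2 := (hmulc m2 _ _ (hFo.trans (abs_pow_isBigO_aux241 (show 1 ≤ k+3 by omega)))).add
      (hmulc m3 _ _ (hGo.trans (abs_pow_isBigO_aux241 (show 1 ≤ k+3 by omega))))
    simpa [add_assoc] using h1.add h2
  have hX : ∀ (q b m2 m3 : ℝ), (fun t : ℝ => q + t * b + m2 * eF t + m3 * eG t)
      =O[nhds 0] fun _ : ℝ => (1:ℝ) := by
    intro q b m2 m3
    have h1 : (fun _ : ℝ => q) =O[nhds 0] fun _ : ℝ => (1:ℝ) :=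
      isBigO_const_const q one_ne_zero _
    have h2 := (hsub b m2 m3).trans habs1
    simpa [add_assoc] using h1.add h2
  have hcomb : (fun t : ℝ =>
      e1 t * (q0 + t * b0 + m02 * eF t + m03 * eG t)
      + e2 t * (q1 + t * b1 + m12 * eF t + m13 * eG t)
      + (t ^ (k + 2) * B1) * (t * b0 + m02 * eF t + m03 * eG t)
      + (t ^ (k + 2) * B2) * (t * b1 + m12 * eF t + m13 * eG t)
      - (m22 * eF t + m23 * eG t)) =O[nhds 0] fun t => |t| ^ (k + 3) := by
    have p1 := (h1o.mul (hX q0 b0 m02 m03)).congr_right (fun t => mul_one _)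
    have p2 := (h2o.mul (hX q1 b1 m12 m13)).congr_right (fun t => mul_one _)
    have hB1 : (fun t : ℝ => t ^ (k + 2) * B1) =O[nhds 0] fun t => |t| ^ (k + 2) := by
      rw [isBigO_iff]
      exact ⟨|B1|, Filter.Eventually.of_forall fun t => by simp [abs_mul, abs_pow, mul_comm]⟩
    have hB2 : (fun t : ℝ => t ^ (k + 2) * B2) =O[nhds 0] fun t => |t| ^ (k + 2) := by
      rw [isBigO_iff]
      exact ⟨|B2|, Filter.Eventually.of_forall fun t => by simp [abs_mul, abs_pow, mul_comm]⟩
    have p3 := (hB1.mul (hsub b0 m02 m03)).congr_right (fun t => by rw [← pow_add])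
    have p4 := (hB2.mul (hsub b1 m12 m13)).congr_right (fun t => by rw [← pow_add])
    have p5 := (hmulc m22 _ _ hFo).add (hmulc m23 _ _ hGo)
    exact (((p1.add p2).add p3).add p4).sub p5
  have hEq : (fun t : ℝ =>
      e1 t * (q0 + t * b0 + m02 * eF t + m03 * eG t)
      + e2 t * (q1 + t * b1 + m12 * eF t + m13 * eG t)
      + (t ^ (k + 2) * B1) * (t * b0 + m02 * eF t + m03 * eG t)
      + (t ^ (k + 2) * B2) * (t * b1 + m12 * eF t + m13 * eG t)
      - (m22 * eF t + m23 * eG t))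
      =ᶠ[nhds 0] fun t : ℝ => q2 + t * b2 + t ^ (k + 2) * (-(q0 * B1 + q1 * B2)) := by
    filter_upwards [heq] with t ht
    linear_combination -ht
  have hO := hcomb.congr' hEq Filter.EventuallyEq.rfl
  obtain ⟨-, -, hA⟩ := polyCoeff_aux241 hO
  linarith

lemma two_by_two_aux241 {u1 u2 w1 w2 x y : ℝ}
    (hind : ∀ s t : ℝ, s • ((u1, u2) : ℝ × ℝ) + t • ((w1, w2) : ℝ × ℝ) = 0 → s = 0 ∧ t = 0)
    (h1 : u1 * x + u2 * y = 0) (h2 : w1 * x + w2 * y = 0) : x = 0 ∧ y = 0 := by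
  have hind' : ∀ s t : ℝ, s * u1 + t * w1 = 0 → s * u2 + t * w2 = 0 → s = 0 ∧ t = 0 := by
    intro s t ha hb
    refine hind s t ?_
    simp only [Prod.smul_mk, smul_eq_mul, Prod.mk_add_mk, Prod.mk_eq_zero]
    exact ⟨ha, hb⟩
  have hD : u1 * w2 - u2 * w1 ≠ 0 := by
    intro hD0
    obtain ⟨hw2, hu2⟩ := hind' w2 (-u2) (by linear_combination hD0) (by ring)
    have hu2' : u2 = 0 := by linarith [neg_eq_zero.1 hu2]
    obtain ⟨hw1, hu1⟩ := hind' w1 (-u1) (by ring) (by rw [hu2', hw2]; ring)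
    have hu1' : u1 = 0 := by linarith [neg_eq_zero.1 hu1]
    obtain ⟨h10, -⟩ := hind' 1 0 (by rw [hu1', hw1]; ring) (by rw [hu2', hw2]; ring)
    exact one_ne_zero h10
  constructor
  · have hx : (u1 * w2 - u2 * w1) * x = 0 := by linear_combination w2 * h1 - u2 * h2
    rcases mul_eq_zero.1 hx with h | h
    exacts [absurd h hD, h]
  · have hy : (u1 * w2 - u2 * w1) * y = 0 := by linear_combination u1 * h2 - w1 * h1
    rcases mul_eq_zero.1 hy with h | h
    exacts [absurd h hD, h]

open Filter Asymptotics Nat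

/-- **Proposition 24.1.** In Branch 2a (all order-1 and order-2 terms of `F`, `G` vanish
at the origin), an affinely homogeneous surface `{u = F, v = G}` is, near the origin,
the affine plane `{u = 0, v = 0}`. -/
theorem prop_24_1
    (U : Set (ℝ × ℝ)) (hUopen : IsOpen U) (hU0 : (0, 0) ∈ U)
    (F G : ℝ × ℝ → ℝ)
    (hFan : AnalyticOnNhd ℝ F U) (hGan : AnalyticOnNhd ℝ G U)
    (hF0 : F (0, 0) = 0) (hG0 : G (0, 0) = 0)
    (hF1 : iteratedFDeriv ℝ 1 F (0, 0) = 0) (hF2 : iteratedFDeriv ℝ 2 F (0, 0) = 0)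
    (hG1 : iteratedFDeriv ℝ 1 G (0, 0) = 0) (hG2 : iteratedFDeriv ℝ 2 G (0, 0) = 0)
    (L L' : (Fin 4 → ℝ) → Fin 4 → ℝ)
    (hL : IsAffineVF L) (hL' : IsAffineVF L')
    (hLt : TangentToGraphOn F G U L) (hL't : TangentToGraphOn F G U L')
    (hind : LinearIndependent ℝ
      ![((L ![0, 0, 0, 0] 0, L ![0, 0, 0, 0] 1) : ℝ × ℝ),
        ((L' ![0, 0, 0, 0] 0, L' ![0, 0, 0, 0] 1) : ℝ × ℝ)]) :
    ∃ V : Set (ℝ × ℝ), IsOpen V ∧ (0, 0) ∈ V ∧ ∀ p ∈ V, F p = 0 ∧ G p = 0 := by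
  classical
  obtain ⟨M, c, hM⟩ := hL
  obtain ⟨M', c', hM'⟩ := hL'
  rw [show ((0, 0) : ℝ × ℝ) = 0 from rfl] at hU0 hF0 hG0 hF1 hF2 hG1 hG2 ⊢
  -- analyticity facts
  have hFa0 : AnalyticAt ℝ F 0 := hFan 0 hU0
  have hGa0 : AnalyticAt ℝ G 0 := hGan 0 hU0
  have hFda : AnalyticAt ℝ (fderiv ℝ F) 0 := (AnalyticOnNhd.fderiv hFan) 0 hU0
  have hGda : AnalyticAt ℝ (fderiv ℝ G) 0 := (AnalyticOnNhd.fderiv hGan) 0 hU0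
  -- diagonal succ formula
  have hsucc : ∀ (f : ℝ × ℝ → ℝ) (n : ℕ) (w : ℝ × ℝ),
      iteratedFDeriv ℝ (n + 1) f 0 (fun _ => w)
        = iteratedFDeriv ℝ n (fderiv ℝ f) 0 (fun _ => w) w := by
    intro f n w
    rw [iteratedFDeriv_succ_apply_right]
    rfl
  -- first derivatives vanish at 0
  have hdF0 : fderiv ℝ F 0 = 0 := by
    refine ContinuousLinearMap.ext fun u => ?_
    have h1 := iteratedFDeriv_one_apply (𝕜 := ℝ) (f := F) (x := (0 : ℝ × ℝ)) (fun _ => u)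
    rw [hF1] at h1
    simpa using h1.symm
  have hdG0 : fderiv ℝ G 0 = 0 := by
    refine ContinuousLinearMap.ext fun u => ?_
    have h1 := iteratedFDeriv_one_apply (𝕜 := ℝ) (f := G) (x := (0 : ℝ × ℝ)) (fun _ => u)
    rw [hG1] at h1
    simpa using h1.symm
  -- the key induction: all diagonal iterated derivatives of fderiv F, fderiv G vanish
  have hQ0 : ∀ w : ℝ × ℝ, iteratedFDeriv ℝ 0 (fderiv ℝ F) 0 (fun _ => w) = 0 ∧
      iteratedFDeriv ℝ 0 (fderiv ℝ G) 0 (fun _ => w) = 0 := by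
    intro w
    rw [iteratedFDeriv_zero_apply, iteratedFDeriv_zero_apply, hdF0, hdG0]
    exact ⟨rfl, rfl⟩
  have hQ1 : ∀ w : ℝ × ℝ, iteratedFDeriv ℝ 1 (fderiv ℝ F) 0 (fun _ => w) = 0 ∧
      iteratedFDeriv ℝ 1 (fderiv ℝ G) 0 (fun _ => w) = 0 := by
    intro w
    constructor
    · rw [iteratedFDeriv_one_apply]
      refine ContinuousLinearMap.ext fun u => ?_
      have h2 := iteratedFDeriv_two_apply (𝕜 := ℝ) F (0 : ℝ × ℝ) ![w, u]
      rw [hF2] at h2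
      simpa using h2.symm
    · rw [iteratedFDeriv_one_apply]
      refine ContinuousLinearMap.ext fun u => ?_
      have h2 := iteratedFDeriv_two_apply (𝕜 := ℝ) G (0 : ℝ × ℝ) ![w, u]
      rw [hG2] at h2
      simpa using h2.symm
  -- value of L, L' at points of the line t • v
  have hXval : ∀ (v : ℝ × ℝ) (t : ℝ) (i : Fin 4),
      L ![(t • v).1, (t • v).2, F (t • v), G (t • v)] i
        = c i + t * (M i 0 * v.1 + M i 1 * v.2) + M i 2 * F (t • v) + M i 3 * G (t • v) := by
    intro v t i
    rw [hM]
    simp only [Pi.add_apply, Matrix.mulVec, dotProduct, Fin.sum_univ_four,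
      Matrix.cons_val_zero, Matrix.cons_val_one, Matrix.head_cons, Matrix.cons_val_two,
      Matrix.tail_cons, Matrix.cons_val_three, Prod.smul_fst, Prod.smul_snd, smul_eq_mul]
    ring
  have hXval' : ∀ (v : ℝ × ℝ) (t : ℝ) (i : Fin 4),
      L' ![(t • v).1, (t • v).2, F (t • v), G (t • v)] i
        = c' i + t * (M' i 0 * v.1 + M' i 1 * v.2) + M' i 2 * F (t • v) + M' i 3 * G (t • v) := by
    intro v t i
    rw [hM']
    simp only [Pi.add_apply, Matrix.mulVec, dotProduct, Fin.sum_univ_four,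
      Matrix.cons_val_zero, Matrix.cons_val_one, Matrix.head_cons, Matrix.cons_val_two,
      Matrix.tail_cons, Matrix.cons_val_three, Prod.smul_fst, Prod.smul_snd, smul_eq_mul]
    ring
  -- linear independence in scalar form
  have hL0 : ∀ i, L ![0, 0, 0, 0] i = c i := by
    intro i
    rw [hM]
    simp [Matrix.mulVec, dotProduct, Fin.sum_univ_four]
  have hL0' : ∀ i, L' ![0, 0, 0, 0] i = c' i := by
    intro i
    rw [hM']
    simp [Matrix.mulVec, dotProduct, Fin.sum_univ_four]
  rw [LinearIndependent.pair_iff] at hind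
  have hind' : ∀ s t : ℝ, s • ((c 0, c 1) : ℝ × ℝ) + t • ((c' 0, c' 1) : ℝ × ℝ) = 0 →
      s = 0 ∧ t = 0 := by
    intro s t hst
    exact hind s t (by rw [hL0 0, hL0 1, hL0' 0, hL0' 1]; exact hst)
  -- eventually on the line we are in U
  have hUev : ∀ v : ℝ × ℝ, ∀ᶠ t : ℝ in nhds 0, t • v ∈ U := by
    intro v
    have hc : Continuous fun t : ℝ => t • v := continuous_id.smul continuous_const
    exact (hc.tendsto' 0 0 (by simp)) (hUopen.mem_nhds hU0)
  -- THE KEY CLAIM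
  have key : ∀ n, ∀ w : ℝ × ℝ, iteratedFDeriv ℝ n (fderiv ℝ F) 0 (fun _ => w) = 0 ∧
      iteratedFDeriv ℝ n (fderiv ℝ G) 0 (fun _ => w) = 0 := by
    by_contra hq
    have hex : ∃ n, ¬ ∀ w : ℝ × ℝ, iteratedFDeriv ℝ n (fderiv ℝ F) 0 (fun _ => w) = 0 ∧
        iteratedFDeriv ℝ n (fderiv ℝ G) 0 (fun _ => w) = 0 := not_forall.1 hq
    have hm := Nat.find_spec hex
    have hmin : ∀ j, j < Nat.find hex →
        ∀ w : ℝ × ℝ, iteratedFDeriv ℝ j (fderiv ℝ F) 0 (fun _ => w) = 0 ∧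
          iteratedFDeriv ℝ j (fderiv ℝ G) 0 (fun _ => w) = 0 :=
      fun j hj => not_not.1 (Nat.find_min hex hj)
    have hm0 : Nat.find hex ≠ 0 := fun h => hm (h ▸ hQ0)
    have hm1 : Nat.find hex ≠ 1 := fun h => hm (h ▸ hQ1)
    obtain ⟨k, hk⟩ : ∃ k, Nat.find hex = k + 2 := ⟨Nat.find hex - 2, by omega⟩
    have hminF : ∀ j, j < k + 2 →
        ∀ w : ℝ × ℝ, iteratedFDeriv ℝ j (fderiv ℝ F) 0 (fun _ => w) = 0 :=
      fun j hj w => (hmin j (lt_of_lt_of_eq hj hk.symm) w).1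
    have hminG : ∀ j, j < k + 2 →
        ∀ w : ℝ × ℝ, iteratedFDeriv ℝ j (fderiv ℝ G) 0 (fun _ => w) = 0 :=
      fun j hj w => (hmin j (lt_of_lt_of_eq hj hk.symm) w).2
    have hFdiag : ∀ j, j < k + 3 → ∀ w : ℝ × ℝ, iteratedFDeriv ℝ j F 0 (fun _ => w) = 0 := by
      intro j hj w
      cases j with
      | zero => simpa using hF0
      | succ i =>
        rw [hsucc F i w, hminF i (by omega) w]
        simp
    have hGdiag : ∀ j, j < k + 3 → ∀ w : ℝ × ℝ, iteratedFDeriv ℝ j G 0 (fun _ => w) = 0 := by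
      intro j hj w
      cases j with
      | zero => simpa using hG0
      | succ i =>
        rw [hsucc G i w, hminG i (by omega) w]
        simp
    refine hm ?_
    rw [hk]
    intro v
    -- Taylor bounds
    have hFo : (fun t : ℝ => F (t • v)) =O[nhds 0] fun t => |t| ^ (k + 3) :=
      taylorA'_aux241 hFa0 (k + 3) hFdiag v
    have hGo : (fun t : ℝ => G (t • v)) =O[nhds 0] fun t => |t| ^ (k + 3) :=
      taylorA'_aux241 hGa0 (k + 3) hGdiag v
    have hdFO := taylorA_aux241 hFda (k + 2) hminF v
    have hdGO := taylorA_aux241 hGda (k + 2) hminG v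
    set BF : ℝ × ℝ →L[ℝ] ℝ :=
      ((k + 2)! : ℝ)⁻¹ • iteratedFDeriv ℝ (k + 2) (fderiv ℝ F) 0 (fun _ => v) with hBFdef
    set BG : ℝ × ℝ →L[ℝ] ℝ :=
      ((k + 2)! : ℝ)⁻¹ • iteratedFDeriv ℝ (k + 2) (fderiv ℝ G) 0 (fun _ => v) with hBGdef
    have he1F : (fun t : ℝ => fderiv ℝ F (t • v) (1, 0) - t ^ (k + 2) * BF (1, 0))
        =O[nhds 0] fun t => |t| ^ (k + 3) := by
      refine (apply_isBigO_aux241 hdFO ((1 : ℝ), (0 : ℝ))).congr_left fun t => ?_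
      simp [ContinuousLinearMap.sub_apply, ContinuousLinearMap.smul_apply, smul_eq_mul, hBFdef]
    have he2F : (fun t : ℝ => fderiv ℝ F (t • v) (0, 1) - t ^ (k + 2) * BF (0, 1))
        =O[nhds 0] fun t => |t| ^ (k + 3) := by
      refine (apply_isBigO_aux241 hdFO ((0 : ℝ), (1 : ℝ))).congr_left fun t => ?_
      simp [ContinuousLinearMap.sub_apply, ContinuousLinearMap.smul_apply, smul_eq_mul, hBFdef]
    have he1G : (fun t : ℝ => fderiv ℝ G (t • v) (1, 0) - t ^ (k + 2) * BG (1, 0))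
        =O[nhds 0] fun t => |t| ^ (k + 3) := by
      refine (apply_isBigO_aux241 hdGO ((1 : ℝ), (0 : ℝ))).congr_left fun t => ?_
      simp [ContinuousLinearMap.sub_apply, ContinuousLinearMap.smul_apply, smul_eq_mul, hBGdef]
    have he2G : (fun t : ℝ => fderiv ℝ G (t • v) (0, 1) - t ^ (k + 2) * BG (0, 1))
        =O[nhds 0] fun t => |t| ^ (k + 3) := by
      refine (apply_isBigO_aux241 hdGO ((0 : ℝ), (1 : ℝ))).congr_left fun t => ?_
      simp [ContinuousLinearMap.sub_apply, ContinuousLinearMap.smul_apply, smul_eq_mul, hBGdef]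
    -- row equations from tangency, F-row
    have hrowF : c 0 * BF (1, 0) + c 1 * BF (0, 1) = 0 := by
      refine core_aux241 k (BF (1, 0)) (BF (0, 1)) (c 0) (c 1) (c 2)
        (M 0 0 * v.1 + M 0 1 * v.2) (M 1 0 * v.1 + M 1 1 * v.2) (M 2 0 * v.1 + M 2 1 * v.2)
        (M 0 2) (M 0 3) (M 1 2) (M 1 3) (M 2 2) (M 2 3)
        (fun t => F (t • v)) (fun t => G (t • v))
        (fun t => fderiv ℝ F (t • v) (1, 0) - t ^ (k + 2) * BF (1, 0))
        (fun t => fderiv ℝ F (t • v) (0, 1) - t ^ (k + 2) * BF (0, 1))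
        hFo hGo he1F he2F ?_
      filter_upwards [hUev v] with t ht
      have H := (hLt (t • v) ht).1
      rw [hXval v t 0, hXval v t 1, hXval v t 2] at H
      linear_combination H
    have hrowF' : c' 0 * BF (1, 0) + c' 1 * BF (0, 1) = 0 := by
      refine core_aux241 k (BF (1, 0)) (BF (0, 1)) (c' 0) (c' 1) (c' 2)
        (M' 0 0 * v.1 + M' 0 1 * v.2) (M' 1 0 * v.1 + M' 1 1 * v.2)
        (M' 2 0 * v.1 + M' 2 1 * v.2)
        (M' 0 2) (M' 0 3) (M' 1 2) (M' 1 3) (M' 2 2) (M' 2 3)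
        (fun t => F (t • v)) (fun t => G (t • v))
        (fun t => fderiv ℝ F (t • v) (1, 0) - t ^ (k + 2) * BF (1, 0))
        (fun t => fderiv ℝ F (t • v) (0, 1) - t ^ (k + 2) * BF (0, 1))
        hFo hGo he1F he2F ?_
      filter_upwards [hUev v] with t ht
      have H := (hL't (t • v) ht).1
      rw [hXval' v t 0, hXval' v t 1, hXval' v t 2] at H
      linear_combination H
    have hrowG : c 0 * BG (1, 0) + c 1 * BG (0, 1) = 0 := by
      refine core_aux241 k (BG (1, 0)) (BG (0, 1)) (c 0) (c 1) (c 3)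
        (M 0 0 * v.1 + M 0 1 * v.2) (M 1 0 * v.1 + M 1 1 * v.2) (M 3 0 * v.1 + M 3 1 * v.2)
        (M 0 2) (M 0 3) (M 1 2) (M 1 3) (M 3 2) (M 3 3)
        (fun t => F (t • v)) (fun t => G (t • v))
        (fun t => fderiv ℝ G (t • v) (1, 0) - t ^ (k + 2) * BG (1, 0))
        (fun t => fderiv ℝ G (t • v) (0, 1) - t ^ (k + 2) * BG (0, 1))
        hFo hGo he1G he2G ?_
      filter_upwards [hUev v] with t ht
      have H := (hLt (t • v) ht).2
      rw [hXval v t 0, hXval v t 1, hXval v t 3] at H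
      linear_combination H
    have hrowG' : c' 0 * BG (1, 0) + c' 1 * BG (0, 1) = 0 := by
      refine core_aux241 k (BG (1, 0)) (BG (0, 1)) (c' 0) (c' 1) (c' 3)
        (M' 0 0 * v.1 + M' 0 1 * v.2) (M' 1 0 * v.1 + M' 1 1 * v.2)
        (M' 3 0 * v.1 + M' 3 1 * v.2)
        (M' 0 2) (M' 0 3) (M' 1 2) (M' 1 3) (M' 3 2) (M' 3 3)
        (fun t => F (t • v)) (fun t => G (t • v))
        (fun t => fderiv ℝ G (t • v) (1, 0) - t ^ (k + 2) * BG (1, 0))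
        (fun t => fderiv ℝ G (t • v) (0, 1) - t ^ (k + 2) * BG (0, 1))
        hFo hGo he1G he2G ?_
      filter_upwards [hUev v] with t ht
      have H := (hL't (t • v) ht).2
      rw [hXval' v t 0, hXval' v t 1, hXval' v t 3] at H
      linear_combination H
    -- conclude that BF = 0 and BG = 0
    obtain ⟨hBF1, hBF2⟩ := two_by_two_aux241 hind' hrowF hrowF'
    obtain ⟨hBG1, hBG2⟩ := two_by_two_aux241 hind' hrowG hrowG'
    have hBFzero : BF = 0 := by
      refine ContinuousLinearMap.ext fun w => ?_
      have hw : w = w.1 • ((1 : ℝ), (0 : ℝ)) + w.2 • ((0 : ℝ), (1 : ℝ)) := by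
        apply Prod.ext <;> simp
      rw [hw, map_add, map_smul, map_smul, hBF1, hBF2]
      simp
    have hBGzero : BG = 0 := by
      refine ContinuousLinearMap.ext fun w => ?_
      have hw : w = w.1 • ((1 : ℝ), (0 : ℝ)) + w.2 • ((0 : ℝ), (1 : ℝ)) := by
        apply Prod.ext <;> simp
      rw [hw, map_add, map_smul, map_smul, hBG1, hBG2]
      simp
    constructor
    · have : iteratedFDeriv ℝ (k + 2) (fderiv ℝ F) 0 (fun _ => v) = ((k + 2)! : ℝ) • BF := by
        rw [hBFdef, smul_smul,
          mul_inv_cancel₀ (Nat.cast_ne_zero.2 (Nat.factorial_ne_zero (k + 2))), one_smul]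
      rw [this, hBFzero, smul_zero]
    · have : iteratedFDeriv ℝ (k + 2) (fderiv ℝ G) 0 (fun _ => v) = ((k + 2)! : ℝ) • BG := by
        rw [hBGdef, smul_smul,
          mul_inv_cancel₀ (Nat.cast_ne_zero.2 (Nat.factorial_ne_zero (k + 2))), one_smul]
      rw [this, hBGzero, smul_zero]
  -- all diagonal derivatives of F and G vanish at the origin
  have hFall : ∀ n, ∀ w : ℝ × ℝ, iteratedFDeriv ℝ n F 0 (fun _ => w) = 0 := by
    intro n w
    cases n with
    | zero => simpa using hF0
    | succ i =>
      rw [hsucc F i w, (key i w).1]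
      simp
  have hGall : ∀ n, ∀ w : ℝ × ℝ, iteratedFDeriv ℝ n G 0 (fun _ => w) = 0 := by
    intro n w
    cases n with
    | zero => simpa using hG0
    | succ i =>
      rw [hsucc G i w, (key i w).2]
      simp
  -- conclude via summation of the power series
  obtain ⟨pF, rF, hpF⟩ := hFa0
  obtain ⟨pG, rG, hpG⟩ := hGa0
  refine ⟨EMetric.ball 0 rF ∩ EMetric.ball 0 rG,
    EMetric.isOpen_ball.inter EMetric.isOpen_ball,
    ⟨EMetric.mem_ball_self hpF.r_pos, EMetric.mem_ball_self hpG.r_pos⟩, ?_⟩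
  intro q hq
  constructor
  · have hs := hpF.hasSum_iteratedFDeriv hq.1
    have hz : (fun n : ℕ => (n ! : ℝ)⁻¹ • iteratedFDeriv ℝ n F 0 fun _ => q)
        = fun _ : ℕ => (0 : ℝ) := by
      funext n
      rw [hFall n q]
      simp
    rw [hz] at hs
    have := hs.unique hasSum_zero
    simpa using this
  · have hs := hpG.hasSum_iteratedFDeriv hq.2
    have hz : (fun n : ℕ => (n ! : ℝ)⁻¹ • iteratedFDeriv ℝ n G 0 fun _ => q)
        = fun _ : ℕ => (0 : ℝ) := by
      funext n
      rw [hGall n q]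
      simp
    rw [hz] at hs
    have := hs.unique hasSum_zero
    simpa using this
end

section
/- (Differential consequences of the parabolicity PDE, Section 8) Let U ⊆ ℝ² be open and let F : U → ℝ be three times continuously differentiable, with F_xx(p) ≠ 0 for every p ∈ U and F_xx·F_yy = (F_xy)² identically on U. Then identically on U: F_xyy = 2·F_xy·F_xxy/F_xx − (F_xy)²·F_xxx/(F_xx)², and F_yyy = 3·(F_xy)²·F_xxy/(F_xx)² − 2·(F_xy)³·F_xxx/(F_xx)³. -/
/-- Partial derivative in the `x`-direction. -/
noncomputable def pdx (f : ℝ × ℝ → ℝ) : ℝ × ℝ → ℝ := fun p => fderiv ℝ f p (1, 0)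

/-- Partial derivative in the `y`-direction. -/
noncomputable def pdy (f : ℝ × ℝ → ℝ) : ℝ × ℝ → ℝ := fun p => fderiv ℝ f p (0, 1)

/-! Differentiating `F_xx F_yy - F_xy² = 0` along `x` and along `y` and using the symmetry of third
derivatives gives two relations that are linear in `F_xyy` and `F_yyy`. Since `F_xx ≠ 0`, the
first determines `F_xyy`, and after substituting `F_yy = F_xy² / F_xx` the second determines
`F_yyy`. -/

open Filter Topology

noncomputable def partialDeriv {E : Type*} [NormedAddCommGroup E] [NormedSpace ℝ E]
    (v : E) (f : E → ℝ) : E → ℝ :=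
  fun p => fderiv ℝ f p v

namespace partialDeriv

variable {E : Type*} [NormedAddCommGroup E] [NormedSpace ℝ E] {f g : E → ℝ} {p : E}

theorem contDiffAt {n : WithTop ℕ∞} (v : E) (hf : ContDiffAt ℝ (n + 1) f p) :
    ContDiffAt ℝ n (partialDeriv v f) p :=
  (hf.fderiv_right le_rfl).clm_apply contDiffAt_const

theorem differentiableAt (v : E) (hf : ContDiffAt ℝ 2 f p) :
    DifferentiableAt ℝ (partialDeriv v f) p :=
  (contDiffAt (n := 1) v hf).differentiableAt one_ne_zero

theorem mul (v : E) (hf : DifferentiableAt ℝ f p) (hg : DifferentiableAt ℝ g p) :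
    partialDeriv v (f * g) p = partialDeriv v f p * g p + f p * partialDeriv v g p := by
  simp only [partialDeriv, fderiv_mul hf hg, add_apply, smul_apply, smul_eq_mul]
  ring

theorem sub (v : E) (hf : DifferentiableAt ℝ f p) (hg : DifferentiableAt ℝ g p) :
    partialDeriv v (f - g) p = partialDeriv v f p - partialDeriv v g p := by
  simp only [partialDeriv, fderiv_sub hf hg, sub_apply]

theorem _root_.Filter.EventuallyEq.partialDeriv_eq (v : E) (h : f =ᶠ[𝓝 p] g) :
    partialDeriv v f p = partialDeriv v g p := by
  simp only [partialDeriv, h.fderiv_eq]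

theorem eq_zero_of_eventuallyEq_zero (v : E) (h : f =ᶠ[𝓝 p] 0) : partialDeriv v f p = 0 := by
  simp [partialDeriv, h.fderiv_eq]

theorem _root_.partialDeriv_partialDeriv (v w : E) (hf : DifferentiableAt ℝ (fderiv ℝ f) p) :
    partialDeriv w (partialDeriv v f) p = fderiv ℝ (fderiv ℝ f) p w v := by
  have h : HasFDerivAt (partialDeriv v f)
      ((ContinuousLinearMap.apply ℝ ℝ v).comp (fderiv ℝ (fderiv ℝ f) p)) p :=
    (ContinuousLinearMap.apply ℝ ℝ v).hasFDerivAt.comp p hf.hasFDerivAt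
  exact congrArg (· w) h.fderiv

theorem comm (v w : E) (hf : ContDiffAt ℝ 2 f p) :
    partialDeriv w (partialDeriv v f) p = partialDeriv v (partialDeriv w f) p := by
  have hd : DifferentiableAt ℝ (fderiv ℝ f) p :=
    (hf.fderiv_right le_rfl).differentiableAt one_ne_zero
  rw [partialDeriv_partialDeriv v w hd, partialDeriv_partialDeriv w v hd]
  exact hf.isSymmSndFDerivAt (by simp) w v

theorem comm_eventuallyEq (v w : E) (hf : ∀ᶠ q in 𝓝 p, ContDiffAt ℝ 2 f q) :
    partialDeriv w (partialDeriv v f) =ᶠ[𝓝 p] partialDeriv v (partialDeriv w f) :=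
  hf.mono fun _ hq => comm v w hq

end partialDeriv

section HessianMinor

variable {E : Type*} [NormedAddCommGroup E] [NormedSpace ℝ E] {f : E → ℝ} {p : E}

local notation "∂" => partialDeriv

noncomputable def hessianMinor (v w : E) (f : E → ℝ) : E → ℝ :=
  ∂ v (∂ v f) * ∂ w (∂ w f) - ∂ w (∂ v f) ^ 2

theorem partialDeriv_hessianMinor (u v w : E) (hf : ContDiffAt ℝ 3 f p) :
    ∂ u (hessianMinor v w f) p = ∂ u (∂ v (∂ v f)) p * ∂ w (∂ w f) p
      + ∂ v (∂ v f) p * ∂ u (∂ w (∂ w f)) p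
      - 2 * ∂ w (∂ v f) p * ∂ u (∂ w (∂ v f)) p := by
  have hd : ∀ a b : E, DifferentiableAt ℝ (∂ b (∂ a f)) p := fun a b =>
    partialDeriv.differentiableAt b (partialDeriv.contDiffAt (n := 2) a hf)
  rw [hessianMinor, partialDeriv.sub u ((hd v v).mul (hd w w)) ((hd v w).pow 2),
    partialDeriv.mul u (hd v v) (hd w w), pow_two, partialDeriv.mul u (hd v w) (hd v w)]
  ring

theorem third_partialDeriv_relations_of_hessianMinor_eventuallyEq_zero (x y : E)
    (hf : ContDiffAt ℝ 3 f p) (h : hessianMinor x y f =ᶠ[𝓝 p] 0) :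
    ∂ x (∂ x (∂ x f)) p * ∂ y (∂ y f) p + ∂ x (∂ x f) p * ∂ y (∂ y (∂ x f)) p
        - 2 * ∂ y (∂ x f) p * ∂ y (∂ x (∂ x f)) p = 0 ∧
      ∂ y (∂ x (∂ x f)) p * ∂ y (∂ y f) p + ∂ x (∂ x f) p * ∂ y (∂ y (∂ y f)) p
        - 2 * ∂ y (∂ x f) p * ∂ y (∂ y (∂ x f)) p = 0 := by
  have hf2 : ∀ᶠ q in 𝓝 p, ContDiffAt ℝ 2 f q :=
    (hf.eventually (by simp)).mono fun _ hq => hq.of_le (by norm_num)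
  have hxxy : ∂ x (∂ y (∂ x f)) p = ∂ y (∂ x (∂ x f)) p :=
    partialDeriv.comm y x (partialDeriv.contDiffAt (n := 2) x hf)
  have hxyy : ∂ x (∂ y (∂ y f)) p = ∂ y (∂ y (∂ x f)) p := by
    rw [partialDeriv.comm y x (partialDeriv.contDiffAt (n := 2) y hf)]
    exact (partialDeriv.comm_eventuallyEq y x hf2).partialDeriv_eq y
  have hx := partialDeriv_hessianMinor x x y hf
  have hy := partialDeriv_hessianMinor y x y hf
  rw [partialDeriv.eq_zero_of_eventuallyEq_zero x h, hxxy, hxyy] at hx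
  rw [partialDeriv.eq_zero_of_eventuallyEq_zero y h] at hy
  exact ⟨hx.symm, hy.symm⟩

end HessianMinor

theorem parabolic_third_order_system_solution {K : Type*} [Field K] {a b c A B C D : K}
    (ha : a ≠ 0) (hpar : a * c = b ^ 2) (hx : A * c + a * C - 2 * b * B = 0)
    (hy : B * c + a * D - 2 * b * C = 0) :
    C = 2 * b * B / a - b ^ 2 * A / a ^ 2 ∧
      D = 3 * b ^ 2 * B / a ^ 2 - 2 * b ^ 3 * A / a ^ 3 := by
  constructor
  · field_simp
    linear_combination a * hx - A * hpar
  · field_simp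
    linear_combination a ^ 2 * hy + 2 * a * b * hx - (a * B + 2 * b * A) * hpar

/-- **Differential consequences of the parabolicity PDE** (Section 8).
If `F` is `C³` on an open set `U`, `F_xx ≠ 0` on `U` and
`F_xx · F_yy = (F_xy)²` on `U`, then the third-order derivatives
`F_xyy` and `F_yyy` are determined by `F_xx, F_xy, F_xxx, F_xxy`. -/
theorem parabolic_pde_consequences
    (U : Set (ℝ × ℝ)) (hU : IsOpen U) (F : ℝ × ℝ → ℝ)
    (hF : ContDiffOn ℝ 3 F U)
    (hxx : ∀ p ∈ U, pdx (pdx F) p ≠ 0)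
    (hpar : ∀ p ∈ U, pdx (pdx F) p * pdy (pdy F) p = (pdy (pdx F) p) ^ 2) :
    ∀ p ∈ U,
      (pdy (pdy (pdx F)) p
          = 2 * pdy (pdx F) p * pdy (pdx (pdx F)) p / pdx (pdx F) p
            - (pdy (pdx F) p) ^ 2 * pdx (pdx (pdx F)) p / (pdx (pdx F) p) ^ 2) ∧
      (pdy (pdy (pdy F)) p
          = 3 * (pdy (pdx F) p) ^ 2 * pdy (pdx (pdx F)) p / (pdx (pdx F) p) ^ 2
            - 2 * (pdy (pdx F) p) ^ 3 * pdx (pdx (pdx F)) p / (pdx (pdx F) p) ^ 3) := by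
  intro p hp
  have hminor : hessianMinor (1, 0) (0, 1) F =ᶠ[𝓝 p] 0 := by
    filter_upwards [hU.mem_nhds hp] with q hq
    exact sub_eq_zero.mpr (hpar q hq)
  obtain ⟨hx, hy⟩ :=
    third_partialDeriv_relations_of_hessianMinor_eventuallyEq_zero (1, 0) (0, 1)
    (hF.contDiffAt (hU.mem_nhds hp)) hminor
  exact parabolic_third_order_system_solution (hxx p hp) (hpar p hp) hx hy
end
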